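/- arXiv:math/0409340 — 7 statements merged into one kernel-verified Lean document; each statement's English description precedes it below -/
import Mathlib

section
/- Let ABC and A'B'C' be nondegenerate triangles in the Euclidean plane with dist(A,C) = dist(A',C'), dist(A,B) = dist(A',B'), and let L > 1 be a real number such that ∠BAC ≤ ∠B'A'C' ≤ L·∠BAC and L·∠B'A'C' − ∠BAC ≤ π·(L−1). Then the affine transformation mapping ABC onto A'B'C' is bi-Lipschitz with constant L, i.e. L⁻¹·dist(x,y) ≤ dist(f(x),f(y)) ≤ L·dist(x,y) for all x, y in the plane. -/
/-!
With `u = B - A`, `v = C - A` and `α = ∠BAC`, `α' = ∠B'A'C'`, the linear part `g` of `f` keeps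
`‖u‖` and `‖v‖`, so for `w = p u + q v`
`L²‖w‖² - ‖g w‖² = (L² - 1)(p²‖u‖² + q²‖v‖²) + 2pq‖u‖‖v‖(L² cos α - cos α')`,
which is nonnegative as soon as `|L² cos α - cos α'| ≤ L² - 1`; symmetrically for `‖w‖ ≤ L‖g w‖`.
Writing `1 ∓ cos x = 2 sin² (x/2)`, resp. `2 sin² ((π - x)/2)`, these four cosine bounds follow
from `sin (s/2) ≤ L sin (t/2)` whenever `s ≤ L t` in `[0, π]`, a consequence of the concavity of
`sin` on `[0, π]`; the angle hypotheses supply exactly the four needed instances of `s ≤ L t`.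
-/

open EuclideanGeometry Real

theorem sin_mul_le_mul_sin {L x : ℝ} (hL : 1 ≤ L) (hx : 0 ≤ x) (hLx : L * x ≤ π) :
    sin (L * x) ≤ L * sin x := by
  have hL0 : 0 < L := by linarith
  have h := strictConcaveOn_sin_Icc.concaveOn.2 (⟨le_rfl, pi_pos.le⟩ : (0 : ℝ) ∈ Set.Icc 0 π)
    (⟨by positivity, hLx⟩ : L * x ∈ Set.Icc 0 π)
    (sub_nonneg.2 (inv_le_one_of_one_le₀ hL)) (inv_nonneg.2 hL0.le) (sub_add_cancel 1 L⁻¹)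
  rw [smul_eq_mul, smul_eq_mul, smul_eq_mul, smul_eq_mul, mul_zero, sin_zero, mul_zero, zero_add,
    zero_add, inv_mul_cancel_left₀ hL0.ne'] at h
  rwa [inv_mul_le_iff₀ hL0] at h

theorem sin_half_le_mul_sin_half {L s t : ℝ} (hL : 1 ≤ L) (hs : s ∈ Set.Icc 0 π)
    (ht : t ∈ Set.Icc 0 π) (hst : s ≤ L * t) :
    sin (s / 2) ≤ L * sin (t / 2) := by
  obtain ⟨hs0, hsπ⟩ := hs
  obtain ⟨ht0, htπ⟩ := ht
  rcases le_or_gt (L * t) π with hLt | hLt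
  · calc sin (s / 2) ≤ sin (L * (t / 2)) :=
          sin_le_sin_of_le_of_le_pi_div_two (by linarith) (by linarith) (by linarith)
      _ ≤ L * sin (t / 2) := sin_mul_le_mul_sin hL (by linarith) (by linarith)
  · calc sin (s / 2) ≤ 1 := sin_le_one _
      _ ≤ L * (2 / π * (t / 2)) := by
          rw [show L * (2 / π * (t / 2)) = L * t / π by ring, one_le_div pi_pos]; exact hLt.le
      _ ≤ L * sin (t / 2) := by gcongr; exact mul_le_sin (by linarith) (by linarith)

theorem sq_mul_cos_sub_cos_le {L s t : ℝ} (hL : 1 ≤ L) (hs : s ∈ Set.Icc 0 π)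
    (ht : t ∈ Set.Icc 0 π) (hst : s ≤ L * t) :
    L ^ 2 * cos t - cos s ≤ L ^ 2 - 1 := by
  have hs_half : 0 ≤ sin (s / 2) :=
    sin_nonneg_of_nonneg_of_le_pi (by linarith [hs.1]) (by linarith [hs.2, pi_pos])
  have h := pow_le_pow_left₀ hs_half (sin_half_le_mul_sin_half hL hs ht hst) 2
  have half_sq (x : ℝ) : sin (x / 2) ^ 2 = (1 - cos x) / 2 := by
    rw [sin_sq, cos_sq, show 2 * (x / 2) = x by ring]; ring
  rw [mul_pow, half_sq, half_sq] at h
  linarith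

theorem abs_sq_mul_cos_sub_cos_le {L s t : ℝ} (hL : 1 ≤ L) (hs : s ∈ Set.Icc 0 π)
    (ht : t ∈ Set.Icc 0 π) (hst : s ≤ L * t) (hst' : L * t - s ≤ π * (L - 1)) :
    |L ^ 2 * cos t - cos s| ≤ L ^ 2 - 1 := by
  have hπs : π - s ∈ Set.Icc 0 π := ⟨by linarith [hs.2], by linarith [hs.1]⟩
  have hπt : π - t ∈ Set.Icc 0 π := ⟨by linarith [ht.2], by linarith [ht.1]⟩
  have h := sq_mul_cos_sub_cos_le hL hπs hπt (by linarith)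
  rw [cos_pi_sub, cos_pi_sub] at h
  exact abs_le.2 ⟨by linarith, sq_mul_cos_sub_cos_le hL hs ht hst⟩

section InnerProductSpace

open InnerProductGeometry

variable {E F : Type*} [NormedAddCommGroup E] [InnerProductSpace ℝ E]
  [NormedAddCommGroup F] [InnerProductSpace ℝ F]

theorem norm_smul_add_smul_sq (u v : E) (p q : ℝ) :
    ‖p • u + q • v‖ ^ 2 =
      p ^ 2 * ‖u‖ ^ 2 + 2 * (p * q) * (cos (angle u v) * (‖u‖ * ‖v‖)) + q ^ 2 * ‖v‖ ^ 2 := by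
  rw [norm_add_sq_real, real_inner_smul_left, real_inner_smul_right,
    cos_angle_mul_norm_mul_norm, norm_smul, norm_smul, mul_pow, mul_pow, norm_eq_abs,
    norm_eq_abs, sq_abs, sq_abs]
  ring

theorem norm_smul_add_smul_le_of_abs_sq_mul_cos_sub_cos_le {u v : E} {u' v' : F} {L : ℝ}
    (hL : 1 ≤ L) (hu : ‖u'‖ = ‖u‖) (hv : ‖v'‖ = ‖v‖)
    (hcos : |L ^ 2 * cos (angle u v) - cos (angle u' v')| ≤ L ^ 2 - 1) (p q : ℝ) :
    ‖p • u' + q • v'‖ ≤ L * ‖p • u + q • v‖ := by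
  set X := L ^ 2 * cos (angle u v) - cos (angle u' v')
  set a := ‖u‖
  set b := ‖v‖
  have hab : 0 ≤ a * b := by positivity
  have hcross : -(|p * q| * (a * b) * (L ^ 2 - 1)) ≤ p * q * (a * b) * X := by
    calc -(|p * q| * (a * b) * (L ^ 2 - 1)) ≤ -|p * q * (a * b) * X| := by
          rw [abs_mul _ X, abs_mul (p * q), abs_of_nonneg hab]; gcongr
      _ ≤ p * q * (a * b) * X := neg_abs_le _
  have hamgm : 2 * |p * q| * (a * b) ≤ p ^ 2 * a ^ 2 + q ^ 2 * b ^ 2 := by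
    nlinarith [sq_nonneg (|p| * a - |q| * b), abs_mul p q, sq_abs p, sq_abs q]
  refine le_of_pow_le_pow_left₀ two_ne_zero (by positivity) ?_
  rw [mul_pow, norm_smul_add_smul_sq, norm_smul_add_smul_sq, hu, hv]
  nlinarith [mul_le_mul_of_nonneg_left hamgm (by nlinarith : (0:ℝ) ≤ L ^ 2 - 1)]

end InnerProductSpace

theorem AffineIndependent.exists_smul_vsub_add_smul_vsub_eq {k V P : Type*} [Field k]
    [AddCommGroup V] [Module k V] [AddTorsor V P] [FiniteDimensional k V]
    (hV : Module.finrank k V = 2) {A B C : P} (h : AffineIndependent k ![A, B, C]) (w : V) :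
    ∃ p q : k, p • (B -ᵥ A) + q • (C -ᵥ A) = w := by
  have hspan : affineSpan k (Set.range ![A, B, C]) = ⊤ :=
    h.affineSpan_eq_top_iff_card_eq_finrank_add_one.2 (by simp [hV])
  have hw : w ∈ vectorSpan k (Set.range ![A, B, C]) := by
    rw [← direction_affineSpan, hspan, AffineSubspace.direction_top]; trivial
  rw [vectorSpan_range_eq_span_range_vsub_right k _ 0,
    Submodule.mem_span_range_iff_exists_fun] at hw
  obtain ⟨c, hc⟩ := hw
  exact ⟨c 1, c 2, by simpa [Fin.sum_univ_three] using hc⟩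

theorem stmt0_general
    (A B C A' B' C' : EuclideanSpace ℝ (Fin 2))
    (hABC : AffineIndependent ℝ ![A, B, C])
    (hAC : dist A C = dist A' C')
    (hAB : dist A B = dist A' B')
    (L : ℝ) (hL : 1 < L)
    (hang1 : ∠ B A C ≤ ∠ B' A' C')
    (hang2 : ∠ B' A' C' ≤ L * ∠ B A C)
    (hang3 : L * ∠ B' A' C' - ∠ B A C ≤ π * (L - 1))
    (f : EuclideanSpace ℝ (Fin 2) →ᵃ[ℝ] EuclideanSpace ℝ (Fin 2))
    (hfA : f A = A') (hfB : f B = B') (hfC : f C = C') :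
    ∀ x y : EuclideanSpace ℝ (Fin 2),
      L⁻¹ * dist x y ≤ dist (f x) (f y) ∧ dist (f x) (f y) ≤ L * dist x y := by
  intro x y
  have hα : ∠ B A C ∈ Set.Icc 0 π := ⟨angle_nonneg _ _ _, angle_le_pi _ _ _⟩
  have hα' : ∠ B' A' C' ∈ Set.Icc 0 π := ⟨angle_nonneg _ _ _, angle_le_pi _ _ _⟩
  have hcos : |L ^ 2 * cos (∠ B A C) - cos (∠ B' A' C')| ≤ L ^ 2 - 1 :=
    abs_sq_mul_cos_sub_cos_le hL.le hα' hα hang2 (by nlinarith)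
  have hcos' : |L ^ 2 * cos (∠ B' A' C') - cos (∠ B A C)| ≤ L ^ 2 - 1 :=
    abs_sq_mul_cos_sub_cos_le hL.le hα hα' (by nlinarith [hα'.1]) hang3
  have hu : ‖B' -ᵥ A'‖ = ‖B -ᵥ A‖ := by
    rw [← dist_eq_norm_vsub, ← dist_eq_norm_vsub, dist_comm, ← hAB, dist_comm]
  have hv : ‖C' -ᵥ A'‖ = ‖C -ᵥ A‖ := by
    rw [← dist_eq_norm_vsub, ← dist_eq_norm_vsub, dist_comm, ← hAC, dist_comm]
  obtain ⟨p, q, hpq⟩ :=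
    hABC.exists_smul_vsub_add_smul_vsub_eq finrank_euclideanSpace_fin (x -ᵥ y)
  have hf : f x -ᵥ f y = p • (B' -ᵥ A') + q • (C' -ᵥ A') := by
    rw [← f.linearMap_vsub, ← hpq, map_add, map_smul, map_smul, f.linearMap_vsub,
      f.linearMap_vsub, hfA, hfB, hfC]
  rw [dist_eq_norm_vsub, dist_eq_norm_vsub, hf, ← hpq, inv_mul_le_iff₀ (by positivity)]
  exact ⟨norm_smul_add_smul_le_of_abs_sq_mul_cos_sub_cos_le hL.le hu.symm hv.symm hcos' p q,
    norm_smul_add_smul_le_of_abs_sq_mul_cos_sub_cos_le hL.le hu hv hcos p q⟩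

/-- Lemma 2 (affin-1) of Belenkiy–Burago: if two nondegenerate planar triangles
`ABC`, `A'B'C'` satisfy `dist A C = dist A' C'`, `dist A B = dist A' B'`,
`∠BAC ≤ ∠B'A'C' ≤ L·∠BAC` and `L·∠B'A'C' − ∠BAC ≤ π·(L−1)` for some `L > 1`,
then the affine transformation mapping `ABC` onto `A'B'C'` is bi-Lipschitz with
constant `L`. -/
theorem stmt0
    (A B C A' B' C' : EuclideanSpace ℝ (Fin 2))
    (hABC : AffineIndependent ℝ ![A, B, C])
    (hA'B'C' : AffineIndependent ℝ ![A', B', C'])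
    (hAC : dist A C = dist A' C')
    (hAB : dist A B = dist A' B')
    (L : ℝ) (hL : 1 < L)
    (hang1 : ∠ B A C ≤ ∠ B' A' C')
    (hang2 : ∠ B' A' C' ≤ L * ∠ B A C)
    (hang3 : L * ∠ B' A' C' - ∠ B A C ≤ π * (L - 1))
    (f : EuclideanSpace ℝ (Fin 2) →ᵃ[ℝ] EuclideanSpace ℝ (Fin 2))
    (hfA : f A = A') (hfB : f B = B') (hfC : f C = C') :
    ∀ x y : EuclideanSpace ℝ (Fin 2),
      L⁻¹ * dist x y ≤ dist (f x) (f y) ∧ dist (f x) (f y) ≤ L * dist x y :=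
  stmt0_general A B C A' B' C' hABC hAC hAB L hL hang1 hang2 hang3 f hfA hfB hfC
end

section
/- Let L ≥ 1 and ε ∈ (0, π/2]. Let ABC and A'B'C' be nondegenerate triangles in the Euclidean plane such that L⁻¹ ≤ dist(A,B)/dist(A',B') ≤ L, L⁻¹ ≤ dist(A,C)/dist(A',C') ≤ L, ε ≤ ∠BAC ≤ π − ε, and ε ≤ ∠B'A'C' ≤ π − ε. Then the affine transformation mapping ABC onto A'B'C' is bi-Lipschitz with constant (L·π/(2ε))². -/
/-!
If `|⟪x, y⟫| ≤ c ‖x‖ ‖y‖`, then `‖x + y‖²` lies between `(1 - c)(‖x‖² + ‖y‖²)` and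
`(1 + c)(‖x‖² + ‖y‖²)`. The angle condition gives this with `c = cos ε` for `u = B - A`,
`v = C - A` and for their images `u' = B' - A'`, `v' = C' - A'`. The lower bound makes `u`, `v`
a basis; writing `x - y = s u + t v`, so that `f x - f y = s u' + t v'`, the side ratios give
`‖f x - f y‖² ≤ L² (1 + c) / (1 - c) ‖x - y‖²`, and symmetrically. Finally
`(1 + cos ε) / (1 - cos ε) = cot² (ε / 2) ≤ (π / (2ε))⁴`, because concavity of `sin` gives
`sin (ε / 2) ≥ (2ε / π) sin (π / 4)`.
-/

open EuclideanGeometry Real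

theorem Real.mul_sin_le_sin_mul {a x : ℝ} (ha₀ : 0 ≤ a) (ha : a ≤ π) (hx₀ : 0 ≤ x) (hx : x ≤ 1) :
    x * sin a ≤ sin (a * x) := by
  simpa [mul_comm x] using
    strictConcaveOn_sin_Icc.concaveOn.2 ⟨le_rfl, pi_pos.le⟩ ⟨ha₀, ha⟩ (sub_nonneg.2 hx) hx₀

theorem Real.two_mul_pow_four_mul_one_add_cos_le {x : ℝ} (hx₀ : 0 ≤ x) (hx : x ≤ π / 2) :
    (2 * x) ^ 4 * (1 + cos x) ≤ π ^ 4 * (1 - cos x) := by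
  obtain ⟨a, rfl⟩ : ∃ a, π / 2 * a = x := ⟨2 * x / π, by field_simp⟩
  have ha₀ : 0 ≤ a := nonneg_of_mul_nonneg_right hx₀ (by positivity)
  have ha : a ≤ 1 := by nlinarith [pi_pos]
  have hsin : a * (√2 / 2) ≤ sin (π / 4 * a) := by
    simpa [sin_pi_div_four] using
      mul_sin_le_sin_mul (a := π / 4) (by positivity) (by linarith [pi_pos]) ha₀ ha
  have hsin_sq : a ^ 2 / 2 ≤ sin (π / 4 * a) ^ 2 := by
    nlinarith [mul_self_le_mul_self (by positivity) hsin, sq_sqrt (zero_le_two (α := ℝ))]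
  have hcos : cos (π / 2 * a) = 1 - 2 * sin (π / 4 * a) ^ 2 := by
    rw [show π / 2 * a = 2 * (π / 4 * a) by ring, cos_two_mul, cos_sq']
    ring
  suffices a ^ 4 * (1 - sin (π / 4 * a) ^ 2) ≤ sin (π / 4 * a) ^ 2 by
    rw [hcos]
    nlinarith [pow_pos pi_pos 4]
  nlinarith [mul_le_mul_of_nonneg_right hsin_sq (by positivity : (0:ℝ) ≤ 1 + a ^ 4),
    sq_nonneg (1 - a ^ 2)]

theorem sq_mul_one_add_cos_le {L ε : ℝ} (hL : 1 ≤ L) (hε₀ : 0 < ε) (hε : ε ≤ π / 2) :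
    L ^ 2 * (1 + cos ε) ≤ ((L * π / (2 * ε)) ^ 2) ^ 2 * (1 - cos ε) := by
  have hcos : 0 ≤ 1 + cos ε := by linarith [neg_one_le_cos ε]
  have hL4 : L ^ 2 ≤ L ^ 4 := pow_le_pow_right₀ hL (by norm_num)
  rw [show ((L * π / (2 * ε)) ^ 2) ^ 2 = L ^ 4 * π ^ 4 / (2 * ε) ^ 4 by ring,
    div_mul_eq_mul_div, le_div_iff₀ (by positivity)]
  calc L ^ 2 * (1 + cos ε) * (2 * ε) ^ 4 ≤ L ^ 4 * ((2 * ε) ^ 4 * (1 + cos ε)) := by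
        nlinarith [mul_nonneg hcos (by positivity : (0:ℝ) ≤ (2 * ε) ^ 4)]
    _ ≤ L ^ 4 * (π ^ 4 * (1 - cos ε)) :=
        mul_le_mul_of_nonneg_left (two_mul_pow_four_mul_one_add_cos_le hε₀.le hε) (by positivity)
    _ = L ^ 4 * π ^ 4 * (1 - cos ε) := by ring

theorem pos_and_le_mul_and_le_mul_of_div_mem_Icc {a b L : ℝ} (hL : 0 < L)
    (hb₀ : 0 ≤ b) (h : a / b ∈ Set.Icc L⁻¹ L) : 0 < a ∧ b ≤ L * a ∧ a ≤ L * b := by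
  have hab : 0 < a / b := (inv_pos.2 hL).trans_le h.1
  have hb : 0 < b := hb₀.lt_of_ne (by rintro rfl; simp at hab)
  exact ⟨(div_pos_iff_of_pos_right hb).1 hab, (inv_mul_le_iff₀ hL).1 ((le_div_iff₀ hb).1 h.1),
    (div_le_iff₀ hb).1 h.2⟩

theorem exists_smul_add_smul_eq_of_linearIndependent {K V : Type*} [DivisionRing K]
    [AddCommGroup V] [Module K V] (hV : Module.finrank K V = 2) {u v : V}
    (h : LinearIndependent K ![u, v]) (w : V) : ∃ s t : K, s • u + t • v = w := by
  have hspan := h.span_eq_top_of_card_eq_finrank (by simp [hV])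
  rw [Matrix.range_cons_cons_empty] at hspan
  exact Submodule.mem_span_pair.1 (hspan ▸ Submodule.mem_top)

section InnerProductSpace

variable {V : Type*} [NormedAddCommGroup V] [InnerProductSpace ℝ V]

open InnerProductGeometry
open scoped RealInnerProductSpace

theorem InnerProductGeometry.abs_inner_le_cos_mul_of_angle_mem {x y : V} {ε : ℝ} (hε : 0 ≤ ε)
    (h₁ : ε ≤ angle x y) (h₂ : angle x y ≤ π - ε) :
    |⟪x, y⟫| ≤ cos ε * (‖x‖ * ‖y‖) := by
  have hub : cos (angle x y) ≤ cos ε := cos_le_cos_of_nonneg_of_le_pi hε (angle_le_pi x y) h₁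
  have hlb : cos (π - ε) ≤ cos (angle x y) :=
    cos_le_cos_of_nonneg_of_le_pi (angle_nonneg x y) (by linarith) h₂
  rw [cos_pi_sub] at hlb
  rw [← cos_angle_mul_norm_mul_norm, abs_mul, abs_of_nonneg (by positivity : 0 ≤ ‖x‖ * ‖y‖)]
  exact mul_le_mul_of_nonneg_right (abs_le.2 ⟨hlb, hub⟩) (by positivity)

theorem abs_inner_smul_smul_le {x y : V} {c : ℝ} (h : |⟪x, y⟫| ≤ c * (‖x‖ * ‖y‖)) (s t : ℝ) :
    |⟪s • x, t • y⟫| ≤ c * (‖s • x‖ * ‖t • y‖) := by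
  rw [real_inner_smul_left, real_inner_smul_right, norm_smul, norm_smul, abs_mul, abs_mul,
    Real.norm_eq_abs, Real.norm_eq_abs]
  calc |s| * (|t| * |⟪x, y⟫|) ≤ |s| * (|t| * (c * (‖x‖ * ‖y‖))) := by gcongr
    _ = c * (|s| * ‖x‖ * (|t| * ‖y‖)) := by ring

theorem abs_norm_add_sq_sub_le {x y : V} {c : ℝ} (hc : 0 ≤ c)
    (h : |⟪x, y⟫| ≤ c * (‖x‖ * ‖y‖)) :
    |‖x + y‖ ^ 2 - (‖x‖ ^ 2 + ‖y‖ ^ 2)| ≤ c * (‖x‖ ^ 2 + ‖y‖ ^ 2) := by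
  rw [norm_add_sq_real, show ‖x‖ ^ 2 + 2 * ⟪x, y⟫ + ‖y‖ ^ 2 - (‖x‖ ^ 2 + ‖y‖ ^ 2)
    = 2 * ⟪x, y⟫ by ring, abs_mul, abs_two]
  nlinarith [two_mul_le_add_sq ‖x‖ ‖y‖]

theorem linearIndependent_pair_of_abs_inner_le {u v : V} {c : ℝ} (hc : c < 1) (hu : u ≠ 0)
    (hv : v ≠ 0) (h : |⟪u, v⟫| ≤ c * (‖u‖ * ‖v‖)) : LinearIndependent ℝ ![u, v] := by
  have hc₀ : 0 ≤ c :=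
    nonneg_of_mul_nonneg_left ((abs_nonneg _).trans h) (by positivity)
  refine LinearIndependent.pair_iff.2 fun s t hst => ?_
  have hbound := (abs_le.1 (abs_norm_add_sq_sub_le hc₀ (abs_inner_smul_smul_le h s t))).1
  rw [hst, norm_zero, norm_smul, norm_smul] at hbound
  have hsum : (‖s‖ * ‖u‖) ^ 2 + (‖t‖ * ‖v‖) ^ 2 = 0 := by
    nlinarith [sq_nonneg (‖s‖ * ‖u‖), sq_nonneg (‖t‖ * ‖v‖)]
  simpa [hu, hv] using (add_eq_zero_iff_of_nonneg (sq_nonneg _) (sq_nonneg _)).1 hsum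

theorem norm_add_le_mul_norm_add {x y x' y' : V} {c L K : ℝ} (hc : 0 ≤ c) (hK₀ : 0 ≤ K)
    (hK : L ^ 2 * (1 + c) ≤ K ^ 2 * (1 - c)) (hx : ‖x'‖ ≤ L * ‖x‖) (hy : ‖y'‖ ≤ L * ‖y‖)
    (hxy : |⟪x, y⟫| ≤ c * (‖x‖ * ‖y‖)) (hxy' : |⟪x', y'⟫| ≤ c * (‖x'‖ * ‖y'‖)) :
    ‖x' + y'‖ ≤ K * ‖x + y‖ := by
  have hupper := (abs_le.1 (abs_norm_add_sq_sub_le hc hxy')).2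
  have hlower := (abs_le.1 (abs_norm_add_sq_sub_le hc hxy)).1
  have hx2 : ‖x'‖ ^ 2 ≤ L ^ 2 * ‖x‖ ^ 2 := by
    rw [← mul_pow]; exact pow_le_pow_left₀ (norm_nonneg _) hx 2
  have hy2 : ‖y'‖ ^ 2 ≤ L ^ 2 * ‖y‖ ^ 2 := by
    rw [← mul_pow]; exact pow_le_pow_left₀ (norm_nonneg _) hy 2
  refine le_of_pow_le_pow_left₀ two_ne_zero (by positivity) ?_
  calc ‖x' + y'‖ ^ 2 ≤ (1 + c) * (‖x'‖ ^ 2 + ‖y'‖ ^ 2) := by linarith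
    _ ≤ L ^ 2 * (1 + c) * (‖x‖ ^ 2 + ‖y‖ ^ 2) := by nlinarith
    _ ≤ K ^ 2 * (1 - c) * (‖x‖ ^ 2 + ‖y‖ ^ 2) := by gcongr
    _ ≤ (K * ‖x + y‖) ^ 2 := by rw [mul_pow]; nlinarith [sq_nonneg K]

theorem norm_smul_add_smul_le_mul_norm_smul_add_smul {u v u' v' : V} {c L K : ℝ} (hc : 0 ≤ c)
    (hK₀ : 0 ≤ K) (hK : L ^ 2 * (1 + c) ≤ K ^ 2 * (1 - c)) (hu : ‖u'‖ ≤ L * ‖u‖)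
    (hv : ‖v'‖ ≤ L * ‖v‖) (huv : |⟪u, v⟫| ≤ c * (‖u‖ * ‖v‖))
    (huv' : |⟪u', v'⟫| ≤ c * (‖u'‖ * ‖v'‖)) (s t : ℝ) :
    ‖s • u' + t • v'‖ ≤ K * ‖s • u + t • v‖ := by
  refine norm_add_le_mul_norm_add hc hK₀ hK ?_ ?_ (abs_inner_smul_smul_le huv s t)
    (abs_inner_smul_smul_le huv' s t)
  · rw [norm_smul, norm_smul, mul_left_comm]; gcongr
  · rw [norm_smul, norm_smul, mul_left_comm]; gcongr

end InnerProductSpace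

theorem stmt1_general
    (L ε : ℝ) (hL : 1 ≤ L) (hε0 : 0 < ε) (hε : ε ≤ π / 2)
    (A B C A' B' C' : EuclideanSpace ℝ (Fin 2))
    (hc1 : L⁻¹ ≤ dist A B / dist A' B') (hc2 : dist A B / dist A' B' ≤ L)
    (hb1 : L⁻¹ ≤ dist A C / dist A' C') (hb2 : dist A C / dist A' C' ≤ L)
    (hang1 : ε ≤ ∠ B A C) (hang2 : ∠ B A C ≤ π - ε)
    (hang1' : ε ≤ ∠ B' A' C') (hang2' : ∠ B' A' C' ≤ π - ε)
    (f : EuclideanSpace ℝ (Fin 2) →ᵃ[ℝ] EuclideanSpace ℝ (Fin 2))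
    (hfA : f A = A') (hfB : f B = B') (hfC : f C = C') :
    ∀ x y : EuclideanSpace ℝ (Fin 2),
      ((L * π / (2 * ε)) ^ 2)⁻¹ * dist x y ≤ dist (f x) (f y) ∧
        dist (f x) (f y) ≤ (L * π / (2 * ε)) ^ 2 * dist x y := by
  have hK := sq_mul_one_add_cos_le hL hε0 hε
  have hK₀ : 0 < (L * π / (2 * ε)) ^ 2 := by positivity
  have hcos₀ : 0 ≤ cos ε := cos_nonneg_of_mem_Icc ⟨by linarith [pi_pos], hε⟩
  have hcos₁ : cos ε < 1 := by
    simpa using cos_lt_cos_of_nonneg_of_le_pi le_rfl (by linarith [pi_pos]) hε0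
  simp only [dist_comm A, dist_comm A', dist_eq_norm_vsub] at hc1 hc2 hb1 hb2
  obtain ⟨hu₀, hu', hu⟩ := pos_and_le_mul_and_le_mul_of_div_mem_Icc (by linarith) (norm_nonneg _)
    ⟨hc1, hc2⟩
  obtain ⟨hv₀, hv', hv⟩ := pos_and_le_mul_and_le_mul_of_div_mem_Icc (by linarith) (norm_nonneg _)
    ⟨hb1, hb2⟩
  have huv := InnerProductGeometry.abs_inner_le_cos_mul_of_angle_mem hε0.le hang1 hang2
  have huv' := InnerProductGeometry.abs_inner_le_cos_mul_of_angle_mem hε0.le hang1' hang2'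
  intro x y
  obtain ⟨s, t, hst⟩ := exists_smul_add_smul_eq_of_linearIndependent finrank_euclideanSpace_fin
    (linearIndependent_pair_of_abs_inner_le hcos₁ (norm_pos_iff.1 hu₀) (norm_pos_iff.1 hv₀) huv)
    (x -ᵥ y)
  have hfst : s • (B' -ᵥ A') + t • (C' -ᵥ A') = f x -ᵥ f y := by
    rw [← f.linearMap_vsub, ← hst, map_add, map_smul, map_smul, f.linearMap_vsub,
      f.linearMap_vsub, hfA, hfB, hfC]
  rw [dist_eq_norm_vsub, dist_eq_norm_vsub, ← hst, ← hfst, inv_mul_le_iff₀ hK₀]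
  exact ⟨norm_smul_add_smul_le_mul_norm_smul_add_smul hcos₀ hK₀.le hK hu hv huv' huv s t,
    norm_smul_add_smul_le_mul_norm_smul_add_smul hcos₀ hK₀.le hK hu' hv' huv huv' s t⟩

/-- Corollary (affin-2) of Belenkiy–Burago: if two nondegenerate planar triangles
`ABC`, `A'B'C'` have side-length ratios at `A` between `L⁻¹` and `L` and angles at
`A` between `ε` and `π − ε`, then the affine transformation mapping `ABC` onto
`A'B'C'` is bi-Lipschitz with constant `(L·π/(2ε))²`. -/
theorem stmt1
    (L ε : ℝ) (hL : 1 ≤ L) (hε0 : 0 < ε) (hε : ε ≤ π / 2)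
    (A B C A' B' C' : EuclideanSpace ℝ (Fin 2))
    (hABC : AffineIndependent ℝ ![A, B, C])
    (hA'B'C' : AffineIndependent ℝ ![A', B', C'])
    (hc1 : L⁻¹ ≤ dist A B / dist A' B') (hc2 : dist A B / dist A' B' ≤ L)
    (hb1 : L⁻¹ ≤ dist A C / dist A' C') (hb2 : dist A C / dist A' C' ≤ L)
    (hang1 : ε ≤ ∠ B A C) (hang2 : ∠ B A C ≤ π - ε)
    (hang1' : ε ≤ ∠ B' A' C') (hang2' : ∠ B' A' C' ≤ π - ε)
    (f : EuclideanSpace ℝ (Fin 2) →ᵃ[ℝ] EuclideanSpace ℝ (Fin 2))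
    (hfA : f A = A') (hfB : f B = B') (hfC : f C = C') :
    ∀ x y : EuclideanSpace ℝ (Fin 2),
      ((L * π / (2 * ε)) ^ 2)⁻¹ * dist x y ≤ dist (f x) (f y) ∧
        dist (f x) (f y) ≤ (L * π / (2 * ε)) ^ 2 * dist x y :=
  stmt1_general L ε hL hε0 hε A B C A' B' C' hc1 hc2 hb1 hb2 hang1 hang2 hang1' hang2' f hfA hfB hfC
end

section
/- Let ABC and A'B'C' be nondegenerate triangles in the Euclidean plane with dist(A,C) = dist(A',C') and dist(A,B) = dist(A',B'). Let D be a point strictly between B and C, let f be the affine transformation mapping ABC onto A'B'C', and let D' = f(D). Set α = ∠BAD, β = ∠CAD, α₁ = ∠B'A'D', β₁ = ∠C'A'D'. Assume α < π/2, β < π/2, 0 < ∠B'A'C' − α < π/2, and 0 < ∠B'A'C' − β < π/2. Then |α − α₁| ≤ |∠BAC − ∠B'A'C'| and |β − β₁| ≤ |∠BAC − ∠B'A'C'|. -/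
/-!
By the ratio lemma, `D` divides `BC` in the ratio `AB · sin ∠BAD : AC · sin ∠CAD`. The affine map
preserves this ratio and the triangles share `AB` and `AC`, so `sin α · sin β₁ = sin α₁ · sin β`.
With `α + β = ∠BAC =: γ` and `α₁ + β₁ = ∠B'A'C' =: γ'` this becomes
`sin γ' · sin (α - α₁) = sin α₁ · (sin β - sin (γ' - α))`, and the angle bounds force `α - α₁`
(and symmetrically `β - β₁`) to have the sign of `γ - γ'`. Two numbers of the same sign as their
sum are each bounded by it in absolute value.
-/

open EuclideanGeometry Real RealInnerProductSpace

variable {V P : Type*} [NormedAddCommGroup V] [InnerProductSpace ℝ V] [MetricSpace P]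
  [NormedAddTorsor V P]

namespace InnerProductGeometry

theorem sin_angle_add_smul_sub_mul_norm_mul_norm (x y : V) (t : ℝ) :
    sin (angle x (x + t • (y - x))) * (‖x‖ * ‖x + t • (y - x)‖) =
      |t| * (sin (angle x y) * (‖x‖ * ‖y‖)) := by
  have hgram : ⟪x, x⟫ * ⟪x + t • (y - x), x + t • (y - x)⟫
      - ⟪x, x + t • (y - x)⟫ * ⟪x, x + t • (y - x)⟫ =
      t ^ 2 * (⟪x, x⟫ * ⟪y, y⟫ - ⟪x, y⟫ * ⟪x, y⟫) := by
    simp only [inner_add_left, inner_add_right, inner_sub_left, inner_sub_right,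
      real_inner_smul_left, real_inner_smul_right, real_inner_comm x y]
    ring
  rw [sin_angle_mul_norm_mul_norm, sin_angle_mul_norm_mul_norm, hgram,
    sqrt_mul (sq_nonneg t), sqrt_sq_eq_abs]

end InnerProductGeometry

namespace EuclideanGeometry

theorem sin_angle_lineMap_mul_dist_mul_dist (A B C : P) (t : ℝ) :
    sin (∠ B A (AffineMap.lineMap B C t)) * (dist A B * dist A (AffineMap.lineMap B C t)) =
      |t| * (sin (∠ B A C) * (dist A B * dist A C)) := by
  have hD : AffineMap.lineMap B C t -ᵥ A = (B -ᵥ A) + t • ((C -ᵥ A) - (B -ᵥ A)) := by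
    rw [AffineMap.lineMap_apply, vadd_vsub_assoc, vsub_sub_vsub_cancel_right, add_comm]
  simp only [angle, dist_comm A, dist_eq_norm_vsub V, hD]
  exact InnerProductGeometry.sin_angle_add_smul_sub_mul_norm_mul_norm _ _ t

theorem abs_one_sub_mul_sin_angle_mul_dist_eq {A B C : P} {t : ℝ}
    (hD : AffineMap.lineMap B C t ≠ A) :
    |1 - t| * (sin (∠ B A (AffineMap.lineMap B C t)) * dist A B) =
      |t| * (sin (∠ C A (AffineMap.lineMap B C t)) * dist A C) := by
  have hB := sin_angle_lineMap_mul_dist_mul_dist A B C t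
  have hC := sin_angle_lineMap_mul_dist_mul_dist A C B (1 - t)
  rw [AffineMap.lineMap_apply_one_sub, angle_comm C A B, mul_comm (dist A C)] at hC
  apply mul_right_cancel₀ (dist_ne_zero.2 hD.symm)
  linear_combination |1 - t| * hB - |t| * hC

theorem sin_angle_mul_sin_angle_lineMap_eq_of_dist_eq {A B C A' B' C' : P} {t : ℝ}
    (ht0 : t ≠ 0) (ht1 : t ≠ 1) (hAB : dist A B = dist A' B') (hAC : dist A C = dist A' C')
    (hB : B ≠ A) (hC : C ≠ A) (hD : AffineMap.lineMap B C t ≠ A)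
    (hD' : AffineMap.lineMap B' C' t ≠ A') :
    sin (∠ B A (AffineMap.lineMap B C t)) * sin (∠ C' A' (AffineMap.lineMap B' C' t)) =
      sin (∠ B' A' (AffineMap.lineMap B' C' t)) * sin (∠ C A (AffineMap.lineMap B C t)) := by
  have h := abs_one_sub_mul_sin_angle_mul_dist_eq hD
  have h' := abs_one_sub_mul_sin_angle_mul_dist_eq hD'
  rw [← hAB, ← hAC] at h'
  have hK : |1 - t| * dist A B * (|t| * dist A C) ≠ 0 := by
    have := sub_ne_zero.2 ht1.symm
    have := dist_ne_zero.2 hB.symm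
    have := dist_ne_zero.2 hC.symm
    positivity
  apply mul_right_cancel₀ hK
  linear_combination (|t| * sin (∠ C' A' (AffineMap.lineMap B' C' t)) * dist A C) * h
    - (|t| * sin (∠ C A (AffineMap.lineMap B C t)) * dist A C) * h'

theorem _root_.Wbtw.ne_of_not_collinear {A B C D : P} (h : Wbtw ℝ B D C)
    (hABC : ¬Collinear ℝ {A, B, C}) : D ≠ A := by
  rintro rfl
  exact hABC (by simpa [Set.insert_comm] using h.collinear)

end EuclideanGeometry

namespace Real

theorem le_of_mul_sin_sub_eq_mul_of_nonpos {x y a b c : ℝ} (ha : 0 < a) (hb : 0 ≤ b)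
    (hc : c ≤ 0) (hxy : x - y < π) (h : a * sin (x - y) = b * c) : x ≤ y := by
  by_contra! hlt
  have hpos : 0 < a * sin (x - y) := mul_pos ha (sin_pos_of_pos_of_lt_pi (by linarith) hxy)
  linarith [mul_nonpos_of_nonneg_of_nonpos hb hc]

theorem sin_mul_sin_sub_eq {α β α₁ β₁ : ℝ} (hstar : sin α * sin β₁ = sin α₁ * sin β) :
    sin (α₁ + β₁) * sin (α - α₁) = sin α₁ * (sin β - sin (α₁ + β₁ - α)) := by
  rw [show α₁ + β₁ - α = β₁ - (α - α₁) by ring]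
  simp only [sin_add, sin_sub, cos_sub]
  linear_combination hstar + sin α * sin β₁ * sin_sq_add_cos_sq α₁

theorem abs_sub_le_abs_sub_of_sin_mul_sin_eq {α β α₁ β₁ γ γ' : ℝ}
    (hsum : α + β = γ) (hsum' : α₁ + β₁ = γ') (hstar : sin α * sin β₁ = sin α₁ * sin β)
    (hα₀ : 0 ≤ α) (hα₁ : 0 ≤ α₁) (hβ₁ : 0 ≤ β₁) (hγ' : γ' < π)
    (hα : α < π / 2) (hβ : β < π / 2) (hα1 : 0 < γ' - α) (hα2 : γ' - α < π / 2)
    (hβ1 : 0 < γ' - β) (hβ2 : γ' - β < π / 2) :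
    |α - α₁| ≤ |γ - γ'| := by
  subst hsum hsum'
  have hsγ' : 0 < sin (α₁ + β₁) := sin_pos_of_pos_of_lt_pi (by linarith) hγ'
  have hsα₁ : 0 ≤ sin α₁ := sin_nonneg_of_nonneg_of_le_pi hα₁ (by linarith)
  have hsβ₁ : 0 ≤ sin β₁ := sin_nonneg_of_nonneg_of_le_pi hβ₁ (by linarith)
  have hα_id := sin_mul_sin_sub_eq hstar
  have hβ_id := sin_mul_sin_sub_eq (α := β) (β := α) (α₁ := β₁) (β₁ := α₁)
    (by linear_combination -hstar)
  rw [add_comm β₁ α₁] at hβ_id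
  rcases le_total (α + β) (α₁ + β₁) with h | h
  · have hαα₁ : α ≤ α₁ := le_of_mul_sin_sub_eq_mul_of_nonpos hsγ' hsα₁
      (sub_nonpos.2 (sin_le_sin_of_le_of_le_pi_div_two (by linarith) (by linarith) (by linarith)))
      (by linarith) hα_id
    have hββ₁ : β ≤ β₁ := le_of_mul_sin_sub_eq_mul_of_nonpos hsγ' hsβ₁
      (sub_nonpos.2 (sin_le_sin_of_le_of_le_pi_div_two (by linarith) (by linarith) (by linarith)))
      (by linarith) hβ_id
    rw [abs_of_nonpos (by linarith), abs_of_nonpos (by linarith)]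
    linarith
  · have hα_id' : sin (α₁ + β₁) * sin (α₁ - α) = sin α₁ * (sin (α₁ + β₁ - α) - sin β) := by
      rw [← neg_sub α α₁, sin_neg]; linear_combination -hα_id
    have hβ_id' : sin (α₁ + β₁) * sin (β₁ - β) = sin β₁ * (sin (α₁ + β₁ - β) - sin α) := by
      rw [← neg_sub β β₁, sin_neg]; linear_combination -hβ_id
    have hα₁α : α₁ ≤ α := le_of_mul_sin_sub_eq_mul_of_nonpos hsγ' hsα₁
      (sub_nonpos.2 (sin_le_sin_of_le_of_le_pi_div_two (by linarith) (by linarith) (by linarith)))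
      (by linarith) hα_id'
    have hβ₁β : β₁ ≤ β := le_of_mul_sin_sub_eq_mul_of_nonpos hsγ' hsβ₁
      (sub_nonpos.2 (sin_le_sin_of_le_of_le_pi_div_two (by linarith) (by linarith) (by linarith)))
      (by linarith) hβ_id'
    rw [abs_of_nonneg (by linarith), abs_of_nonneg (by linarith)]
    linarith

end Real

theorem stmt2_general
    (A B C A' B' C' D : EuclideanSpace ℝ (Fin 2))
    (hABC : AffineIndependent ℝ ![A, B, C])
    (hA'B'C' : AffineIndependent ℝ ![A', B', C'])
    (hAC : dist A C = dist A' C')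
    (hAB : dist A B = dist A' B')
    (hD : Sbtw ℝ B D C)
    (f : EuclideanSpace ℝ (Fin 2) →ᵃ[ℝ] EuclideanSpace ℝ (Fin 2))
    (hfB : f B = B') (hfC : f C = C')
    (D' : EuclideanSpace ℝ (Fin 2)) (hD' : D' = f D)
    (hα : ∠ B A D < π / 2) (hβ : ∠ C A D < π / 2)
    (hα1 : 0 < ∠ B' A' C' - ∠ B A D) (hα2 : ∠ B' A' C' - ∠ B A D < π / 2)
    (hβ1 : 0 < ∠ B' A' C' - ∠ C A D) (hβ2 : ∠ B' A' C' - ∠ C A D < π / 2) :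
    |∠ B A D - ∠ B' A' D'| ≤ |∠ B A C - ∠ B' A' C'| ∧
      |∠ C A D - ∠ C' A' D'| ≤ |∠ B A C - ∠ B' A' C'| := by
  have hncol := affineIndependent_iff_not_collinear_set.1 hABC
  have hncol' := affineIndependent_iff_not_collinear_set.1 hA'B'C'
  have hD'btw : Wbtw ℝ B' D' C' := hfB ▸ hfC ▸ hD' ▸ hD.wbtw.map f
  have hsum : ∠ B A D + ∠ C A D = ∠ B A C := by
    rw [angle_comm C]; exact angle_add_angle_eq_of_sbtw hD
  have hsum' : ∠ B' A' D' + ∠ C' A' D' = ∠ B' A' C' := by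
    rw [angle_comm C']
    exact angle_add_of_ne_of_ne (ne₁₂_of_not_collinear hncol') (ne₁₃_of_not_collinear hncol')
      hD'btw
  have hγ' : ∠ B' A' C' < π := angle_lt_pi_of_not_collinear (by rwa [Set.insert_comm])
  have hstar : sin (∠ B A D) * sin (∠ C' A' D') = sin (∠ B' A' D') * sin (∠ C A D) := by
    have hDA := hD.wbtw.ne_of_not_collinear hncol
    have hD'A' := hD'btw.ne_of_not_collinear hncol'
    obtain ⟨t, ⟨ht0, ht1⟩, rfl⟩ := hD.mem_image_Ioo
    rw [AffineMap.apply_lineMap, hfB, hfC] at hD'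
    subst hD'
    exact sin_angle_mul_sin_angle_lineMap_eq_of_dist_eq ht0.ne' ht1.ne hAB hAC
      (ne₁₂_of_not_collinear hncol).symm (ne₁₃_of_not_collinear hncol).symm hDA hD'A'
  exact ⟨abs_sub_le_abs_sub_of_sin_mul_sin_eq hsum hsum' hstar (angle_nonneg _ _ _)
      (angle_nonneg _ _ _) (angle_nonneg _ _ _) hγ' hα hβ hα1 hα2 hβ1 hβ2,
    abs_sub_le_abs_sub_of_sin_mul_sin_eq (by rwa [add_comm]) (by rwa [add_comm])
      (by linear_combination -hstar) (angle_nonneg _ _ _) (angle_nonneg _ _ _)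
      (angle_nonneg _ _ _) hγ' hβ hα hβ1 hβ2 hα1 hα2⟩

/-- Lemma 4 (affin-3) of Belenkiy–Burago: for two nondegenerate planar triangles
with `dist A C = dist A' C'`, `dist A B = dist A' B'`, a point `D` strictly
between `B` and `C`, and `D'` the image of `D` under the affine transformation
mapping `ABC` onto `A'B'C'`, with `α = ∠BAD`, `β = ∠CAD`, `α₁ = ∠B'A'D'`,
`β₁ = ∠C'A'D'`, if `α < π/2`, `β < π/2`, `0 < ∠B'A'C' − α < π/2`,
`0 < ∠B'A'C' − β < π/2`, then `|α − α₁| ≤ |∠BAC − ∠B'A'C'|` and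
`|β − β₁| ≤ |∠BAC − ∠B'A'C'|`. -/
theorem stmt2
    (A B C A' B' C' D : EuclideanSpace ℝ (Fin 2))
    (hABC : AffineIndependent ℝ ![A, B, C])
    (hA'B'C' : AffineIndependent ℝ ![A', B', C'])
    (hAC : dist A C = dist A' C')
    (hAB : dist A B = dist A' B')
    (hD : Sbtw ℝ B D C)
    (f : EuclideanSpace ℝ (Fin 2) →ᵃ[ℝ] EuclideanSpace ℝ (Fin 2))
    (hfA : f A = A') (hfB : f B = B') (hfC : f C = C')
    (D' : EuclideanSpace ℝ (Fin 2)) (hD' : D' = f D)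
    (hα : ∠ B A D < π / 2) (hβ : ∠ C A D < π / 2)
    (hα1 : 0 < ∠ B' A' C' - ∠ B A D) (hα2 : ∠ B' A' C' - ∠ B A D < π / 2)
    (hβ1 : 0 < ∠ B' A' C' - ∠ C A D) (hβ2 : ∠ B' A' C' - ∠ C A D < π / 2) :
    |∠ B A D - ∠ B' A' D'| ≤ |∠ B A C - ∠ B' A' C'| ∧
      |∠ C A D - ∠ C' A' D'| ≤ |∠ B A C - ∠ B' A' C'| :=
  stmt2_general A B C A' B' C' D hABC hA'B'C' hAC hAB hD f hfB hfC D' hD' hα hβ hα1 hα2 hβ1 hβ2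
end

section
/- Let ABC and A'B'C' be nondegenerate triangles in the Euclidean plane with dist(A,C) = dist(A',C') and dist(A,B) = dist(A',B'). Let D be a point strictly between B and C, let f be the affine transformation mapping ABC onto A'B'C', and let D' = f(D). Set α = ∠BAD, β = ∠CAD, α₁ = ∠B'A'D', β₁ = ∠C'A'D'. Assume α < π/2, β < π/2, 0 < ∠B'A'C' − α < π/2, 0 < ∠B'A'C' − β < π/2, and additionally ∠B'A'C' ≥ ∠BAC. Then α₁ ≥ α and β₁ ≥ β. -/
/-!
By the ratio lemma (the law of sines in the triangles `ABD` and `ACD`, whose angles at `D` are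
supplementary), `sin α · AB · DC = sin β · AC · BD`. The affine map preserves the ratio `BD : DC`
and the two triangles have the same sides at the apex, so `sin α · sin β₁ = sin β · sin α₁`.
Writing `s = ∠B'A'C' = α₁ + β₁ ≥ α + β`, the identity
`sin s · sin (α₁ - α) = sin α₁ · (sin (s - α) - sin β)` and the monotonicity of `sin` on
`[0, π/2]` give `sin (α₁ - α) ≥ 0`, hence `α₁ ≥ α`; symmetrically `β₁ ≥ β`.
-/

open EuclideanGeometry Real

theorem Real.le_of_sin_mul_sin_eq_sin_mul_sin {s a b a₁ b₁ : ℝ} (ha : 0 ≤ a) (hb : 0 ≤ b)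
    (ha₁ : 0 ≤ a₁) (hb₁ : 0 ≤ b₁) (hs : a₁ + b₁ = s) (hab : a + b ≤ s) (ha_lt : a < π / 2)
    (hsa_pos : 0 < s - a) (hsa_lt : s - a < π / 2)
    (hsin : sin a * sin b₁ = sin b * sin a₁) :
    a ≤ a₁ := by
  have hsin_s : 0 < sin s := sin_pos_of_pos_of_lt_pi (by linarith) (by linarith)
  have hsin_b : sin b ≤ sin (s - a) :=
    strictMonoOn_sin.monotoneOn ⟨by linarith, by linarith⟩ ⟨by linarith, hsa_lt.le⟩
      (by linarith)
  have hsin_a₁ : 0 ≤ sin a₁ := sin_nonneg_of_nonneg_of_le_pi ha₁ (by linarith)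
  have key : sin s * sin (a₁ - a) = sin a₁ * (sin (s - a) - sin b) := by
    have hb₁_eq : b₁ = s - a₁ := by linarith
    rw [hb₁_eq, sin_sub] at hsin
    rw [sin_sub, sin_sub]
    linear_combination -hsin
  have hsin_diff : 0 ≤ sin (a₁ - a) :=
    nonneg_of_mul_nonneg_right (key ▸ mul_nonneg hsin_a₁ (sub_nonneg.2 hsin_b)) hsin_s
  by_contra! h
  linarith [sin_neg_of_neg_of_neg_pi_lt (sub_neg.2 h) (by linarith)]

namespace EuclideanGeometry

variable {V P : Type*} [NormedAddCommGroup V] [InnerProductSpace ℝ V] [MetricSpace P]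
  [NormedAddTorsor V P]

theorem sin_angle_mul_dist_mul_dist_eq_of_sbtw {B C D : P} (hD : Sbtw ℝ B D C) (A : P) :
    sin (∠ B A D) * dist A B * dist D C = sin (∠ C A D) * dist A C * dist B D := by
  have hB := law_sin A D B
  have hC := law_sin A D C
  have hsupp : ∠ A D B + ∠ A D C = π := angle_add_angle_eq_pi_of_angle_eq_pi A hD.angle₁₂₃_eq_pi
  have hsin : sin (∠ A D B) = sin (∠ A D C) := by
    rw [eq_sub_of_add_eq hsupp, sin_pi_sub]
  rw [dist_comm D B, dist_comm B A] at hB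
  rw [dist_comm C A] at hC
  linear_combination -dist D C * hB + dist B D * hC + dist B D * dist D C * hsin

theorem sin_angle_lineMap_mul_dist_eq {B C : P} (hBC : B ≠ C) {t : ℝ} (ht₀ : 0 < t) (ht₁ : t < 1)
    (A : P) :
    sin (∠ B A (AffineMap.lineMap B C t)) * dist A B * (1 - t) =
      sin (∠ C A (AffineMap.lineMap B C t)) * dist A C * t := by
  have h := sin_angle_mul_dist_mul_dist_eq_of_sbtw (sbtw_lineMap_iff.2 ⟨hBC, ht₀, ht₁⟩) A
  rw [dist_lineMap_right, dist_left_lineMap, Real.norm_of_nonneg (by linarith),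
    Real.norm_of_nonneg ht₀.le] at h
  refine mul_right_cancel₀ (dist_ne_zero.2 hBC) ?_
  linear_combination h

theorem sin_angle_lineMap_mul_sin_angle_lineMap_eq {A B C A' B' C' : P} (hAB : A ≠ B)
    (hAC : A ≠ C) (hBC : B ≠ C) (hB'C' : B' ≠ C') (hAB' : dist A B = dist A' B')
    (hAC' : dist A C = dist A' C') {t : ℝ} (ht₀ : 0 < t) (ht₁ : t < 1) :
    sin (∠ B A (AffineMap.lineMap B C t)) * sin (∠ C' A' (AffineMap.lineMap B' C' t)) =
      sin (∠ C A (AffineMap.lineMap B C t)) * sin (∠ B' A' (AffineMap.lineMap B' C' t)) := by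
  have h := sin_angle_lineMap_mul_dist_eq hBC ht₀ ht₁ A
  have h' := sin_angle_lineMap_mul_dist_eq hB'C' ht₀ ht₁ A'
  rw [← hAB', ← hAC'] at h'
  have hAB_pos := dist_pos.2 hAB
  have hAC_pos := dist_pos.2 hAC
  refine mul_right_cancel₀ (by positivity : dist A B * (1 - t) * (dist A C * t) ≠ 0) ?_
  linear_combination sin (∠ C' A' (AffineMap.lineMap B' C' t)) * dist A C * t * h -
    sin (∠ C A (AffineMap.lineMap B C t)) * dist A C * t * h'

end EuclideanGeometry

theorem stmt3_general
    (A B C A' B' C' D : EuclideanSpace ℝ (Fin 2))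
    (hABC : AffineIndependent ℝ ![A, B, C])
    (hA'B'C' : AffineIndependent ℝ ![A', B', C'])
    (hAC : dist A C = dist A' C')
    (hAB : dist A B = dist A' B')
    (hD : Sbtw ℝ B D C)
    (f : EuclideanSpace ℝ (Fin 2) →ᵃ[ℝ] EuclideanSpace ℝ (Fin 2))
    (hfB : f B = B') (hfC : f C = C')
    (D' : EuclideanSpace ℝ (Fin 2)) (hD' : D' = f D)
    (hα : ∠ B A D < π / 2) (hβ : ∠ C A D < π / 2)
    (hα1 : 0 < ∠ B' A' C' - ∠ B A D) (hα2 : ∠ B' A' C' - ∠ B A D < π / 2)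
    (hβ1 : 0 < ∠ B' A' C' - ∠ C A D) (hβ2 : ∠ B' A' C' - ∠ C A D < π / 2)
    (hge : ∠ B A C ≤ ∠ B' A' C') :
    ∠ B A D ≤ ∠ B' A' D' ∧ ∠ C A D ≤ ∠ C' A' D' := by
  obtain ⟨⟨t, ⟨ht₀, ht₁⟩, rfl⟩, hBC⟩ := sbtw_iff_mem_image_Ioo_and_ne.1 hD
  have hB'C' : B' ≠ C' := by simpa using hA'B'C'.injective.ne (by decide : (1 : Fin 3) ≠ 2)
  rw [AffineMap.apply_lineMap, hfB, hfC] at hD'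
  subst hD'
  have hsum := angle_add_angle_eq_of_sbtw (p := A) hD
  have hsum' := angle_add_angle_eq_of_sbtw (p := A') (sbtw_lineMap_iff.2 ⟨hB'C', ht₀, ht₁⟩)
  rw [angle_comm _ A C] at hsum
  rw [angle_comm _ A' C'] at hsum'
  have hsin := sin_angle_lineMap_mul_sin_angle_lineMap_eq
    (by simpa using hABC.injective.ne (by decide : (0 : Fin 3) ≠ 1))
    (by simpa using hABC.injective.ne (by decide : (0 : Fin 3) ≠ 2)) hBC hB'C' hAB hAC ht₀ ht₁
  constructor
  · exact le_of_sin_mul_sin_eq_sin_mul_sin (angle_nonneg _ _ _) (angle_nonneg _ _ _)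
      (angle_nonneg _ _ _) (angle_nonneg _ _ _) hsum' (hsum.le.trans hge) hα hα1 hα2 hsin
  · exact le_of_sin_mul_sin_eq_sin_mul_sin (angle_nonneg _ _ _) (angle_nonneg _ _ _)
      (angle_nonneg _ _ _) (angle_nonneg _ _ _) ((add_comm _ _).trans hsum')
      ((add_comm _ _).trans_le (hsum.le.trans hge)) hβ hβ1 hβ2 hsin.symm

/-- Step in the proof of Lemma 4 (affin-3) of Belenkiy–Burago: under the
hypotheses of that lemma and the additional assumption `∠B'A'C' ≥ ∠BAC`, the
angles of the image cevian satisfy `α₁ ≥ α` and `β₁ ≥ β`. -/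
theorem stmt3
    (A B C A' B' C' D : EuclideanSpace ℝ (Fin 2))
    (hABC : AffineIndependent ℝ ![A, B, C])
    (hA'B'C' : AffineIndependent ℝ ![A', B', C'])
    (hAC : dist A C = dist A' C')
    (hAB : dist A B = dist A' B')
    (hD : Sbtw ℝ B D C)
    (f : EuclideanSpace ℝ (Fin 2) →ᵃ[ℝ] EuclideanSpace ℝ (Fin 2))
    (hfA : f A = A') (hfB : f B = B') (hfC : f C = C')
    (D' : EuclideanSpace ℝ (Fin 2)) (hD' : D' = f D)
    (hα : ∠ B A D < π / 2) (hβ : ∠ C A D < π / 2)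
    (hα1 : 0 < ∠ B' A' C' - ∠ B A D) (hα2 : ∠ B' A' C' - ∠ B A D < π / 2)
    (hβ1 : 0 < ∠ B' A' C' - ∠ C A D) (hβ2 : ∠ B' A' C' - ∠ C A D < π / 2)
    (hge : ∠ B A C ≤ ∠ B' A' C') :
    ∠ B A D ≤ ∠ B' A' D' ∧ ∠ C A D ≤ ∠ C' A' D' :=
  stmt3_general A B C A' B' C' D hABC hA'B'C' hAC hAB hD f hfB hfC D' hD' hα hβ hα1 hα2 hβ1 hβ2 hge
end

section
/- Let ABC and A'B'C' be nondegenerate triangles in the Euclidean plane with dist(A,C) = dist(A',C') and dist(A,B) = dist(A',B'). Let D be a point strictly between B and C, let f be the affine transformation mapping ABC onto A'B'C', and let D' = f(D). Then the sine ratio of the cevian is preserved: sin(∠BAD)·sin(∠C'A'D') = sin(∠CAD)·sin(∠B'A'D'). -/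
/-!
Write `D = (1 - t) B + t C`. The doubled areas of `ABD` and `ACD` are `t` and `1 - t` times that
of `ABC`, so `(1 - t) sin∠BAD · AB = t sin∠CAD · AC`. The affine map `f` keeps the parameter `t`,
and the triangles have equal sides at `A`, so the same relation holds with the same coefficients
in `A'B'C'`; eliminating gives the cross-multiplied identity.
-/

open EuclideanGeometry Real

namespace InnerProductGeometry

variable {V : Type*} [NormedAddCommGroup V] [InnerProductSpace ℝ V]

theorem sin_angle_smul_add_smul_mul_norm_mul_norm (u v : V) (a t : ℝ) :
    sin (angle u (a • u + t • v)) * (‖u‖ * ‖a • u + t • v‖) =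
      |t| * (sin (angle u v) * (‖u‖ * ‖v‖)) := by
  rw [sin_angle_mul_norm_mul_norm, sin_angle_mul_norm_mul_norm, ← sqrt_sq_eq_abs,
    ← sqrt_mul (sq_nonneg t)]
  congr 1
  simp only [inner_add_left, inner_add_right, real_inner_smul_left, real_inner_smul_right,
    real_inner_comm v u]
  ring

end InnerProductGeometry

namespace EuclideanGeometry

open InnerProductGeometry AffineMap

variable {V P : Type*} [NormedAddCommGroup V] [InnerProductSpace ℝ V] [MetricSpace P]
  [NormedAddTorsor V P]

theorem abs_one_sub_mul_sin_angle_lineMap_mul_dist {A B C : P} {t : ℝ}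
    (hD : lineMap B C t ≠ A) :
    |1 - t| * sin (∠ B A (lineMap B C t)) * dist A B =
      |t| * sin (∠ C A (lineMap B C t)) * dist A C := by
  set D := lineMap B C t
  have hDA : D -ᵥ A = (1 - t) • (B -ᵥ A) + t • (C -ᵥ A) := by
    rw [lineMap_vsub, lineMap_apply_module]
  have hB : sin (∠ B A D) * (dist A B * dist A D) =
      |t| * (sin (∠ B A C) * (dist A B * dist A C)) := by
    simp only [EuclideanGeometry.angle, dist_eq_norm_vsub', hDA]
    exact sin_angle_smul_add_smul_mul_norm_mul_norm _ _ _ _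
  have hC : sin (∠ C A D) * (dist A C * dist A D) =
      |1 - t| * (sin (∠ B A C) * (dist A B * dist A C)) := by
    rw [add_comm] at hDA
    simp only [EuclideanGeometry.angle, dist_eq_norm_vsub', hDA]
    rw [sin_angle_smul_add_smul_mul_norm_mul_norm, InnerProductGeometry.angle_comm (C -ᵥ A)]
    ring
  have hAD : dist A D ≠ 0 := dist_ne_zero.mpr (Ne.symm hD)
  apply mul_right_cancel₀ hAD
  linear_combination |1 - t| * hB - |t| * hC

theorem _root_.Wbtw.ne_of_affineIndependent {A B C D : P} (hD : Wbtw ℝ B D C)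
    (hABC : AffineIndependent ℝ ![A, B, C]) : D ≠ A := by
  rintro rfl
  exact affineIndependent_iff_not_collinear_set.mp hABC
    (collinear_insert_of_mem_affineSpan_pair hD.mem_affineSpan)

end EuclideanGeometry

theorem stmt4_general
    (A B C A' B' C' D : EuclideanSpace ℝ (Fin 2))
    (hABC : AffineIndependent ℝ ![A, B, C])
    (hA'B'C' : AffineIndependent ℝ ![A', B', C'])
    (hAC : dist A C = dist A' C')
    (hAB : dist A B = dist A' B')
    (hD : Sbtw ℝ B D C)
    (f : EuclideanSpace ℝ (Fin 2) →ᵃ[ℝ] EuclideanSpace ℝ (Fin 2))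
    (hfB : f B = B') (hfC : f C = C')
    (D' : EuclideanSpace ℝ (Fin 2)) (hD' : D' = f D) :
    Real.sin (∠ B A D) * Real.sin (∠ C' A' D') =
      Real.sin (∠ C A D) * Real.sin (∠ B' A' D') := by
  obtain ⟨t, ht, hDt⟩ := hD.mem_image_Ioo
  have hD't : AffineMap.lineMap B' C' t = D' := by
    rw [hD', ← hDt, AffineMap.apply_lineMap, hfB, hfC]
  have hD'_btw : Wbtw ℝ B' D' C' := by rw [hD', ← hfB, ← hfC]; exact hD.wbtw.map f
  have hratio := abs_one_sub_mul_sin_angle_lineMap_mul_dist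
    (hDt ▸ hD.wbtw.ne_of_affineIndependent hABC)
  have hratio' := abs_one_sub_mul_sin_angle_lineMap_mul_dist
    (hD't ▸ hD'_btw.ne_of_affineIndependent hA'B'C')
  rw [hDt] at hratio
  rw [hD't, ← hAB, ← hAC] at hratio'
  have hAC_ne : A ≠ C := hABC.injective.ne (by decide : (0 : Fin 3) ≠ 2)
  have hcoeff : |t| * dist A C ≠ 0 :=
    mul_ne_zero (abs_ne_zero.mpr ht.1.ne') (dist_ne_zero.mpr hAC_ne)
  apply mul_right_cancel₀ hcoeff
  linear_combination sin (∠ B' A' D') * hratio - sin (∠ B A D) * hratio'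

/-- Preservation of the sine ratio of a cevian under the affine transformation
mapping a nondegenerate triangle `ABC` onto `A'B'C'` (with the two sides at `A`
of equal lengths): if `D` is strictly between `B` and `C` and `D' = f D`, then
`sin(∠BAD)·sin(∠C'A'D') = sin(∠CAD)·sin(∠B'A'D')`. -/
theorem stmt4
    (A B C A' B' C' D : EuclideanSpace ℝ (Fin 2))
    (hABC : AffineIndependent ℝ ![A, B, C])
    (hA'B'C' : AffineIndependent ℝ ![A', B', C'])
    (hAC : dist A C = dist A' C')
    (hAB : dist A B = dist A' B')
    (hD : Sbtw ℝ B D C)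
    (f : EuclideanSpace ℝ (Fin 2) →ᵃ[ℝ] EuclideanSpace ℝ (Fin 2))
    (hfA : f A = A') (hfB : f B = B') (hfC : f C = C')
    (D' : EuclideanSpace ℝ (Fin 2)) (hD' : D' = f D) :
    Real.sin (∠ B A D) * Real.sin (∠ C' A' D') =
      Real.sin (∠ C A D) * Real.sin (∠ B' A' D') :=
  stmt4_general A B C A' B' C' D hABC hA'B'C' hAC hAB hD f hfB hfC D' hD'
end

section
/- Let ABC be a nondegenerate triangle in the Euclidean plane, and let D and Z be two points strictly between B and C with dist(B,D) < dist(B,Z). Then sin(∠BAD)·sin(∠CAZ) < sin(∠BAZ)·sin(∠CAD); that is, the ratio sin(∠BAX)/sin(∠CAX) is strictly increasing as the point X moves along the open segment from B to C. -/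
open EuclideanGeometry Real

/-!
By the law of sines in the triangles `ABD` and `ACD`, and since `∠ABD = ∠ABC`, `∠ACD = ∠ACB`,
`sin ∠BAD · AD = sin B · BD` and `sin ∠CAD · AD = sin C · CD`. Hence
`sin ∠BAX / sin ∠CAX = (sin B / sin C) · (BX / CX)`, and `BX / CX` increases with `BX`.
-/

variable {V P : Type*} [NormedAddCommGroup V] [InnerProductSpace ℝ V] [MetricSpace P]
  [NormedAddTorsor V P]

theorem Sbtw.sin_angle_mul_dist_eq {B D C : P} (A : P) (hD : Sbtw ℝ B D C) :
    sin (∠ B A D) * dist A D = sin (∠ A B C) * dist B D := by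
  rw [law_sin B A D, angle_comm, hD.angle_eq_right A, dist_comm]

theorem dist_mul_dist_lt_of_wbtw {B C D Z : P} (hD : Wbtw ℝ B D C) (hZ : Wbtw ℝ B Z C)
    (hDZ : dist B D < dist B Z) : dist B D * dist C Z < dist B Z * dist C D := by
  have hBDC := hD.dist_add_dist
  have hBZC := hZ.dist_add_dist
  rw [dist_comm D C] at hBDC
  rw [dist_comm Z C] at hBZC
  nlinarith [dist_nonneg (x := B) (y := D), dist_nonneg (x := C) (y := Z)]

theorem Sbtw.ne_of_not_collinear {A B C D : P} (h : ¬Collinear ℝ ({A, B, C} : Set P))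
    (hD : Sbtw ℝ B D C) : A ≠ D := by
  rintro rfl
  exact h (by simpa only [Set.insert_comm] using hD.wbtw.collinear)

theorem sin_angle_mul_sin_angle_lt_of_sbtw {A B C D Z : P}
    (h : ¬Collinear ℝ ({A, B, C} : Set P)) (hD : Sbtw ℝ B D C) (hZ : Sbtw ℝ B Z C)
    (hDZ : dist B D < dist B Z) :
    sin (∠ B A D) * sin (∠ C A Z) < sin (∠ B A Z) * sin (∠ C A D) := by
  have hB : 0 < sin (∠ A B C) := sin_pos_of_not_collinear h
  have hC : 0 < sin (∠ A C B) := sin_pos_of_not_collinear (by rwa [Set.pair_comm])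
  have hAD : 0 < dist A D := dist_pos.2 (hD.ne_of_not_collinear h)
  have hAZ : 0 < dist A Z := dist_pos.2 (hZ.ne_of_not_collinear h)
  refine lt_of_mul_lt_mul_right ?_ (mul_pos hAD hAZ).le
  calc sin (∠ B A D) * sin (∠ C A Z) * (dist A D * dist A Z)
      = sin (∠ A B C) * sin (∠ A C B) * (dist B D * dist C Z) := by
        linear_combination (sin (∠ C A Z) * dist A Z) * hD.sin_angle_mul_dist_eq A +
          (sin (∠ A B C) * dist B D) * hZ.symm.sin_angle_mul_dist_eq A
    _ < sin (∠ A B C) * sin (∠ A C B) * (dist B Z * dist C D) :=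
        mul_lt_mul_of_pos_left (dist_mul_dist_lt_of_wbtw hD.wbtw hZ.wbtw hDZ) (mul_pos hB hC)
    _ = sin (∠ B A Z) * sin (∠ C A D) * (dist A D * dist A Z) := by
        linear_combination (-sin (∠ C A D) * dist A D) * hZ.sin_angle_mul_dist_eq A -
          (sin (∠ A B C) * dist B Z) * hD.symm.sin_angle_mul_dist_eq A

/-- Strict monotonicity of the sine ratio along a side: if `ABC` is a
nondegenerate planar triangle and `D`, `Z` lie strictly between `B` and `C`
with `dist B D < dist B Z`, then
`sin(∠BAD)·sin(∠CAZ) < sin(∠BAZ)·sin(∠CAD)`. -/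
theorem stmt5
    (A B C D Z : EuclideanSpace ℝ (Fin 2))
    (hABC : AffineIndependent ℝ ![A, B, C])
    (hD : Sbtw ℝ B D C) (hZ : Sbtw ℝ B Z C)
    (hDZ : dist B D < dist B Z) :
    Real.sin (∠ B A D) * Real.sin (∠ C A Z) <
      Real.sin (∠ B A Z) * Real.sin (∠ C A D) :=
  sin_angle_mul_sin_angle_lt_of_sbtw (affineIndependent_iff_not_collinear_set.1 hABC) hD hZ hDZ
end

section
/- Let ABC be a nondegenerate triangle in the Euclidean plane. Define sequences of points (Bᵢ) and (Cᵢ) by B₀ = B, C₀ = C, and for each i, Bᵢ₊₁ is the point on the segment [A, Bᵢ] and Cᵢ₊₁ the point on the segment [A, Cᵢ] with dist(A, Bᵢ₊₁) = dist(A, Cᵢ₊₁) = (dist(A,Bᵢ) + dist(A,Cᵢ) − dist(Bᵢ,Cᵢ))/2 (the tangent length of the triangle A Bᵢ Cᵢ from the vertex A). Then: (i) for every i the points A, Bᵢ, Cᵢ are affinely independent; (ii) for every n, the partial sum ∑_{i=1}^{n} dist(Bᵢ, Cᵢ) ≤ dist(A,B) + dist(A,C), hence dist(Bᵢ, Cᵢ)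 → 0; and (iii) Bᵢ → A and Cᵢ → A as i → ∞. -/
/-! The sum `dist A Bᵢ + dist A Cᵢ` drops by exactly `dist Bᵢ Cᵢ` at each step, so the partial
sums of `dist Bᵢ Cᵢ` are bounded by `dist A B + dist A C` and the distances tend to zero. The
strict triangle inequality makes every tangent length positive, so by induction `Bᵢ` and `Cᵢ`
stay on the open rays from `A` through `B` and `C`, which keeps `A Bᵢ Cᵢ` nondegenerate. Since
`B - A` and `C - A` are linearly independent, points of the two rays that approach each other
must both approach `A`. -/

open Filter AffineMap Topology

section AffineIndependence

variable {k V P : Type*} [Ring k] [AddCommGroup V] [Module k V] [AddTorsor V P]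

theorem affineIndependent_fin_three_iff_linearIndependent_vsub (p₀ p₁ p₂ : P) :
    AffineIndependent k ![p₀, p₁, p₂] ↔ LinearIndependent k ![p₁ -ᵥ p₀, p₂ -ᵥ p₀] := by
  rw [affineIndependent_iff_linearIndependent_vsub k _ 0,
    ← linearIndependent_equiv (finSuccAboveEquiv (0 : Fin 3))]
  apply Iff.of_eq
  congr 1
  ext i
  fin_cases i <;> rfl

theorem AffineIndependent.lineMap_lineMap {p₀ p₁ p₂ : P} (h : AffineIndependent k ![p₀, p₁, p₂])
    {a b : k} (ha : IsUnit a) (hb : IsUnit b) :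
    AffineIndependent k ![p₀, lineMap p₀ p₁ a, lineMap p₀ p₂ b] := by
  convert h.units_lineMap 0 ![1, ha.unit, hb.unit] using 1
  ext i
  fin_cases i <;> simp

end AffineIndependence

section StrictConvex

variable {V P : Type*} [NormedAddCommGroup V] [NormedSpace ℝ V] [StrictConvexSpace ℝ V]
  [MetricSpace P] [NormedAddTorsor V P]

theorem AffineIndependent.dist_lt_dist_add_dist {p₀ p₁ p₂ : P}
    (h : AffineIndependent ℝ ![p₀, p₁, p₂]) : dist p₁ p₂ < dist p₀ p₁ + dist p₀ p₂ := by
  rw [dist_comm p₀ p₁, dist_lt_dist_add_dist_iff]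
  exact fun hw => affineIndependent_iff_not_collinear_set.1 h.comm_left hw.collinear

end StrictConvex

section Segment

variable {E : Type*} [AddCommGroup E] [Module ℝ E]

theorem exists_pos_eq_lineMap_of_mem_segment_lineMap {A B y : E} {l : ℝ} (hl : 0 < l)
    (hy : y ∈ segment ℝ A (lineMap A B l)) (hyA : y ≠ A) :
    ∃ l' : ℝ, 0 < l' ∧ y = lineMap A B l' := by
  obtain ⟨t, ⟨ht, -⟩, rfl⟩ := mem_segment_iff_wbtw.1 hy
  have ht' : t ≠ 0 := by rintro rfl; simp at hyA
  exact ⟨t * l, mul_pos (ht.lt_of_ne' ht') hl, lineMap_lineMap_right A B l t⟩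

end Segment

theorem sum_range_le_of_succ_eq_sub {s d : ℕ → ℝ} (hs : ∀ n, 0 ≤ s n)
    (hd : ∀ n, s (n + 1) = s n - d n) (n : ℕ) : ∑ i ∈ Finset.range n, d i ≤ s 0 := by
  have hsub : ∀ i, d i = s i - s (i + 1) := fun i => by rw [hd]; ring
  rw [Finset.sum_congr rfl fun i _ => hsub i, Finset.sum_range_sub']
  linarith [hs n]

section Limits

variable {𝕜 V P ι : Type*} [NontriviallyNormedField 𝕜] [CompleteSpace 𝕜]
  [NormedAddCommGroup V] [NormedSpace 𝕜 V] [MetricSpace P] [NormedAddTorsor V P]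

theorem LinearIndependent.tendsto_zero_of_tendsto_smul_add_smul {u v : V}
    (h : LinearIndependent 𝕜 ![u, v]) {a b : ι → 𝕜} {f : Filter ι}
    (hlim : Tendsto (fun n => a n • u + b n • v) f (𝓝 0)) :
    Tendsto a f (𝓝 0) ∧ Tendsto b f (𝓝 0) := by
  have hemb := LinearMap.isClosedEmbedding_of_injective
    (LinearMap.ker_eq_bot.2 (linearIndependent_iff_injective_fintypeLinearCombination.1 h))
  have hab : Tendsto (fun n => ![a n, b n]) f (𝓝 0) := by
    rw [hemb.isInducing.tendsto_nhds_iff]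
    simpa [Function.comp_def, Fintype.linearCombination_apply, Fin.sum_univ_two] using hlim
  rw [tendsto_pi_nhds] at hab
  exact ⟨hab 0, hab 1⟩

theorem AffineIndependent.tendsto_lineMap_of_tendsto_dist {A B C : P}
    (h : AffineIndependent 𝕜 ![A, B, C]) {a b : ι → 𝕜} {f : Filter ι}
    (hlim : Tendsto (fun n => dist (lineMap A B (a n)) (lineMap A C (b n))) f (𝓝 0)) :
    Tendsto (fun n => lineMap A B (a n)) f (𝓝 A) ∧
      Tendsto (fun n => lineMap A C (b n)) f (𝓝 A) := by
  have hvec : Tendsto (fun n => a n • (B -ᵥ A) + (-b n) • (C -ᵥ A)) f (𝓝 0) := by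
    rw [tendsto_zero_iff_norm_tendsto_zero]
    refine hlim.congr fun n => ?_
    rw [dist_eq_norm_vsub V, lineMap_apply, lineMap_apply, vadd_vsub_vadd_cancel_right, neg_smul,
      sub_eq_add_neg]
  obtain ⟨ha, hb⟩ :=
    ((affineIndependent_fin_three_iff_linearIndependent_vsub A B C).1
      h).tendsto_zero_of_tendsto_smul_add_smul hvec
  constructor
  · simpa using tendsto_const_nhds.lineMap tendsto_const_nhds ha
  · simpa using tendsto_const_nhds.lineMap tendsto_const_nhds hb.neg

end Limits

section TangentIteration

variable {E : Type*} [NormedAddCommGroup E] [NormedSpace ℝ E] [StrictConvexSpace ℝ E]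

theorem exists_lineMap_of_tangent_iteration {A B C : E} (hABC : AffineIndependent ℝ ![A, B, C])
    {β γ : ℕ → E} (hβ0 : β 0 = B) (hγ0 : γ 0 = C)
    (hβseg : ∀ i, β (i + 1) ∈ segment ℝ A (β i))
    (hγseg : ∀ i, γ (i + 1) ∈ segment ℝ A (γ i))
    (hβdist : ∀ i, dist A (β (i + 1)) =
      (dist A (β i) + dist A (γ i) - dist (β i) (γ i)) / 2)
    (hγdist : ∀ i, dist A (γ (i + 1)) =
      (dist A (β i) + dist A (γ i) - dist (β i) (γ i)) / 2) (i : ℕ) :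
    ∃ l m : ℝ, 0 < l ∧ 0 < m ∧ β i = lineMap A B l ∧ γ i = lineMap A C m := by
  induction i with
  | zero => exact ⟨1, 1, one_pos, one_pos, by simp [hβ0], by simp [hγ0]⟩
  | succ i ih =>
    obtain ⟨l, m, hl, hm, hβi, hγi⟩ := ih
    have htri := (hABC.lineMap_lineMap hl.ne'.isUnit hm.ne'.isUnit).dist_lt_dist_add_dist
    rw [← hβi, ← hγi] at htri
    have hβA : β (i + 1) ≠ A := by
      rw [← dist_pos, dist_comm, hβdist]; linarith
    have hγA : γ (i + 1) ≠ A := by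
      rw [← dist_pos, dist_comm, hγdist]; linarith
    obtain ⟨l', hl', hβ'⟩ := exists_pos_eq_lineMap_of_mem_segment_lineMap hl (hβi ▸ hβseg i) hβA
    obtain ⟨m', hm', hγ'⟩ := exists_pos_eq_lineMap_of_mem_segment_lineMap hm (hγi ▸ hγseg i) hγA
    exact ⟨l', m', hl', hm', hβ', hγ'⟩

end TangentIteration

/-- The iterated tangent-point construction from the proof of Lemma 5
(small-1) of Belenkiy–Burago: starting from a nondegenerate triangle `ABC`,
define `B₀ = B`, `C₀ = C`, and let `Bᵢ₊₁ ∈ [A, Bᵢ]` and `Cᵢ₊₁ ∈ [A, Cᵢ]` be the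
points at distance `(dist A Bᵢ + dist A Cᵢ − dist Bᵢ Cᵢ)/2` from `A`.  Then all
triangles `A Bᵢ Cᵢ` are nondegenerate, `∑_{i=1}^{n} dist(Bᵢ,Cᵢ) ≤
dist A B + dist A C` for all `n` (hence `dist(Bᵢ,Cᵢ) → 0`), and `Bᵢ → A`,
`Cᵢ → A`. -/
theorem stmt7
    (A B C : EuclideanSpace ℝ (Fin 2))
    (hABC : AffineIndependent ℝ ![A, B, C])
    (β γ : ℕ → EuclideanSpace ℝ (Fin 2))
    (hβ0 : β 0 = B) (hγ0 : γ 0 = C)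
    (hβseg : ∀ i, β (i + 1) ∈ segment ℝ A (β i))
    (hγseg : ∀ i, γ (i + 1) ∈ segment ℝ A (γ i))
    (hβdist : ∀ i, dist A (β (i + 1)) =
      (dist A (β i) + dist A (γ i) - dist (β i) (γ i)) / 2)
    (hγdist : ∀ i, dist A (γ (i + 1)) =
      (dist A (β i) + dist A (γ i) - dist (β i) (γ i)) / 2) :
    (∀ i, AffineIndependent ℝ ![A, β i, γ i]) ∧
    (∀ n : ℕ, ∑ i ∈ Finset.Icc 1 n, dist (β i) (γ i) ≤ dist A B + dist A C) ∧
    Tendsto (fun i => dist (β i) (γ i)) atTop (nhds 0) ∧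
    Tendsto β atTop (nhds A) ∧ Tendsto γ atTop (nhds A) := by
  choose l m hl hm hβ hγ using
    exists_lineMap_of_tangent_iteration hABC hβ0 hγ0 hβseg hγseg hβdist hγdist
  set s : ℕ → ℝ := fun i => dist A (β i) + dist A (γ i)
  have hs : ∀ i, s (i + 1) = s i - dist (β i) (γ i) := fun i => by
    simp only [s, hβdist, hγdist]; ring
  have hbound := sum_range_le_of_succ_eq_sub (fun _ => by positivity) hs
  have hdist : Tendsto (fun i => dist (β i) (γ i)) atTop (𝓝 0) :=
    (summable_of_sum_range_le (fun _ => dist_nonneg) hbound).tendsto_atTop_zero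
  have haff : ∀ i, AffineIndependent ℝ ![A, β i, γ i] := fun i =>
    hβ i ▸ hγ i ▸ hABC.lineMap_lineMap (hl i).ne'.isUnit (hm i).ne'.isUnit
  refine ⟨haff, fun n => ?_, hdist, ?_⟩
  · calc ∑ i ∈ Finset.Icc 1 n, dist (β i) (γ i)
        ≤ ∑ i ∈ Finset.range (n + 1), dist (β i) (γ i) :=
          Finset.sum_le_sum_of_subset_of_nonneg
            (fun i hi => by simp only [Finset.mem_Icc, Finset.mem_range] at hi ⊢; omega)
            fun _ _ _ => dist_nonneg
      _ ≤ s 0 := hbound _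
      _ = dist A B + dist A C := by simp only [s, hβ0, hγ0]
  · rw [funext hβ, funext hγ] at hdist ⊢
    exact hABC.tendsto_lineMap_of_tendsto_dist hdist
end
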